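/- With parameters x₁ = (ϱ₁+ϱ₂)/(ϱ₂λ₁*n), y₁ = ϱ₂/(ϱ₁λ₂*n), x₂ = (ϱ₁+ϱ₂)/(ϱ₁λ₂*n), y₂ = ϱ₁/(ϱ₂λ₁*n), the derivative of the Lyapunov function F along trajectories of the mean-field IRIR system equals −(1/n)·((I₁/R₁)δ₁² + (I₂/R₂)δ₂² + (δ₁+δ₂)²), where δᵢ = Rᵢ − Rᵢ*; in particular it is nonpositive whenever I₁, I₂, R₁, R₂ > 0. -/

import Mathlib

noncomputable def f (xs x : ℝ) : ℝ := xs * (x / xs - Real.log (x / xs) - 1)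

noncomputable def F (x1 y1 x2 y2 I1s R1s I2s R2s I1 R1 I2 R2 : ℝ) : ℝ :=
  x1 * f I1s I1 + y1 * f R1s R1 + x2 * f I2s I2 + y2 * f R2s R2

/-
Along the flow each partial derivative of `F` is `x (1 - x*/x)`, so every term of `dF/dt` carries a
factor `εᵢ = Iᵢ - Iᵢ*` or `δᵢ = Rᵢ - Rᵢ*`. With the chosen weights, the terms linear in `δᵢ`
cancel by the equilibrium relations `λ₂* R₁* = ϱ₂`, `λ₁* R₂* = ϱ₁`, `ϱ₁ I₁* = ϱ₂ I₂*`, and the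
mixed terms add up to `(δ₁ + δ₂)(ε₁ + ε₂)`, which is `-(δ₁ + δ₂)²` by conservation of the population.
-/

theorem hasDerivAt_f {xs x : ℝ} (hxs : xs ≠ 0) (hx : x ≠ 0) :
    HasDerivAt (f xs) (1 - xs / x) x := by
  have hlin : HasDerivAt (· / xs) (1 / xs) x := by
    simpa using (hasDerivAt_id x).div_const xs
  have := ((hlin.sub (hlin.log (div_ne_zero hx hxs))).sub_const 1).const_mul xs
  exact this.congr_deriv (by field_simp)

theorem lyapunov_rate_identity {lam1 lam2 rho1 rho2 n I1s R1s I2s R2s I1 R1 I2 R2 : ℝ}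
    (hlam1 : lam1 ≠ 0) (hlam2 : lam2 ≠ 0) (hrho1 : rho1 ≠ 0) (hrho2 : rho2 ≠ 0) (hn : n ≠ 0)
    (hI1 : I1 ≠ 0) (hR1 : R1 ≠ 0) (hI2 : I2 ≠ 0) (hR2 : R2 ≠ 0)
    (hR1s : lam2 * R1s = rho2) (hR2s : lam1 * R2s = rho1) (hIs : rho1 * I1s = rho2 * I2s)
    (hsum : I1 + I2 + R1 + R2 = I1s + I2s + R1s + R2s) :
    (rho1 + rho2) / (rho2 * lam1 * n) * (1 - I1s / I1) * (lam1 * I1 * R2 - rho1 * I1) +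
      rho2 / (rho1 * lam2 * n) * (1 - R1s / R1) * (rho1 * I1 - lam2 * I2 * R1) +
      (rho1 + rho2) / (rho1 * lam2 * n) * (1 - I2s / I2) * (lam2 * I2 * R1 - rho2 * I2) +
      rho1 / (rho2 * lam1 * n) * (1 - R2s / R2) * (rho2 * I2 - lam1 * I1 * R2) =
      -(1 / n) * ((I1 / R1) * (R1 - R1s) ^ 2 + (I2 / R2) * (R2 - R2s) ^ 2 +
        ((R1 - R1s) + (R2 - R2s)) ^ 2) := by
  have hI1term : (rho1 + rho2) / (rho2 * lam1 * n) * (1 - I1s / I1) *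
      (lam1 * I1 * R2 - rho1 * I1) = (rho1 + rho2) / (rho2 * n) * (I1 - I1s) * (R2 - R2s) := by
    rw [← hR2s]; field_simp
  have hI2term : (rho1 + rho2) / (rho1 * lam2 * n) * (1 - I2s / I2) *
      (lam2 * I2 * R1 - rho2 * I2) = (rho1 + rho2) / (rho1 * n) * (I2 - I2s) * (R1 - R1s) := by
    rw [← hR1s]; field_simp
  have hR1term : rho2 / (rho1 * lam2 * n) * (1 - R1s / R1) * (rho1 * I1 - lam2 * I2 * R1) =
      1 / n * ((R1 - R1s) * I1 - I1 / R1 * (R1 - R1s) ^ 2) -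
        rho2 / (rho1 * n) * (R1 - R1s) * I2 := by
    rw [← hR1s]; field_simp; ring
  have hR2term : rho1 / (rho2 * lam1 * n) * (1 - R2s / R2) * (rho2 * I2 - lam1 * I1 * R2) =
      1 / n * ((R2 - R2s) * I2 - I2 / R2 * (R2 - R2s) ^ 2) -
        rho1 / (rho2 * n) * (R2 - R2s) * I1 := by
    rw [← hR2s]; field_simp; ring
  rw [hI1term, hI2term, hR1term, hR2term]
  -- the `I / R` terms match the target exactly; the rest is `hIs` and `hsum`
  linear_combination (norm := skip) (1 / n) * (((R1 - R1s) / rho1 - (R2 - R2s) / rho2) * hIs +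
    ((R1 - R1s) + (R2 - R2s)) * hsum)
  field_simp
  ring

theorem stmt_6 (lam1 lam2 rho1 rho2 n : ℝ)
    (hlam1 : 0 < lam1) (hlam2 : 0 < lam2) (hrho1 : 0 < rho1) (hrho2 : 0 < rho2)
    (hn : 0 < n)
    (I1s R1s I2s R2s x1 y1 x2 y2 : ℝ)
    (hR1s : R1s = rho2 / lam2) (hR2s : R2s = rho1 / lam1)
    (hI1s : I1s = (n - R1s - R2s) * (rho2 / (rho1 + rho2)))
    (hI2s : I2s = (n - R1s - R2s) * (rho1 / (rho1 + rho2)))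
    (hthr : R1s + R2s < n)
    (hx1 : x1 = (rho1 + rho2) / (rho2 * lam1 * n))
    (hy1 : y1 = rho2 / (rho1 * lam2 * n))
    (hx2 : x2 = (rho1 + rho2) / (rho1 * lam2 * n))
    (hy2 : y2 = rho1 / (rho2 * lam1 * n))
    (I1 R1 I2 R2 : ℝ)
    (hI1 : 0 < I1) (hR1 : 0 < R1) (hI2 : 0 < I2) (hR2 : 0 < R2)
    (hsum : I1 + I2 + R1 + R2 = n) :
    deriv (fun z => F x1 y1 x2 y2 I1s R1s I2s R2s z R1 I2 R2) I1 *
        (lam1 * I1 * R2 - rho1 * I1) +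
      deriv (fun z => F x1 y1 x2 y2 I1s R1s I2s R2s I1 z I2 R2) R1 *
        (rho1 * I1 - lam2 * I2 * R1) +
      deriv (fun z => F x1 y1 x2 y2 I1s R1s I2s R2s I1 R1 z R2) I2 *
        (lam2 * I2 * R1 - rho2 * I2) +
      deriv (fun z => F x1 y1 x2 y2 I1s R1s I2s R2s I1 R1 I2 z) R2 *
        (rho2 * I2 - lam1 * I1 * R2) =
      -(1 / n) * ((I1 / R1) * (R1 - R1s) ^ 2 + (I2 / R2) * (R2 - R2s) ^ 2 +
        ((R1 - R1s) + (R2 - R2s)) ^ 2) ∧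
    -(1 / n) * ((I1 / R1) * (R1 - R1s) ^ 2 + (I2 / R2) * (R2 - R2s) ^ 2 +
        ((R1 - R1s) + (R2 - R2s)) ^ 2) ≤ 0 := by
  have hfree : 0 < n - R1s - R2s := by linarith
  have hR1s0 : 0 < R1s := by rw [hR1s]; positivity
  have hR2s0 : 0 < R2s := by rw [hR2s]; positivity
  have hI1s0 : 0 < I1s := by rw [hI1s]; positivity
  have hI2s0 : 0 < I2s := by rw [hI2s]; positivity
  have hR1s_eq : lam2 * R1s = rho2 := by rw [hR1s]; field_simp
  have hR2s_eq : lam1 * R2s = rho1 := by rw [hR2s]; field_simp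
  have hIs_eq : rho1 * I1s = rho2 * I2s := by rw [hI1s, hI2s]; ring
  have hsum_eq : I1 + I2 + R1 + R2 = I1s + I2s + R1s + R2s := by
    rw [hsum, hI1s, hI2s]; field_simp; ring
  simp only [F, deriv_add_const, deriv_const_add, deriv_const_mul_field',
    (hasDerivAt_f hI1s0.ne' hI1.ne').deriv, (hasDerivAt_f hR1s0.ne' hR1.ne').deriv,
    (hasDerivAt_f hI2s0.ne' hI2.ne').deriv, (hasDerivAt_f hR2s0.ne' hR2.ne').deriv]
  subst hx1 hy1 hx2 hy2
  refine ⟨?_, by rw [neg_mul, neg_nonpos]; positivity⟩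
  exact lyapunov_rate_identity hlam1.ne' hlam2.ne' hrho1.ne' hrho2.ne' hn.ne' hI1.ne' hR1.ne'
    hI2.ne' hR2.ne' hR1s_eq hR2s_eq hIs_eq hsum_eq
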